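/- With m ≥ 2 and D, E, F ⊆ [m] with |D|, |E|, |F| ≤ m−1, for every a = (p, q+ur) with p, q, r ∈ Z_2^m the Lee weight of the codeword c_a satisfies 2·wt_L(c_a) = 2|L| − A·B·C − A·B'·C, where A = 2^m·δ_{0,p} − 2^|D|·χ(supp(p)|D), B = 2^m·δ_{0,r} − 2^|E|·χ(supp(r)|E), B' = 2^m·δ_{0,q+r} − 2^|E|·χ(supp(q+r)|E), C = 2^m·δ_{0,q} − 2^|F|·χ(supp(q)|F), δ_{0,x} = 1 if x = 0 and 0 otherwise, and χ(X|Y) = 1 if X ∩ Y = ∅ and 0 otherwise. -/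
import Mathlib


open Finset

/-- The ring Z_2[u] with u² = 0: dual numbers over Z_2. -/
abbrev R2 : Type := DualNumber (ZMod 2)

/-- The support of a vector in Z_2^m, as a finset of coordinates. -/
def suppF {m : ℕ} (w : Fin m → ZMod 2) : Finset (Fin m) :=
  Finset.univ.filter fun i => w i ≠ 0

/-- Inner product ⟨x,y⟩ = Σ_i x_i y_i in Z_2. -/
def ip {m : ℕ} (x y : Fin m → ZMod 2) : ZMod 2 := ∑ i, x i * y i

/-- The defining set L = Δ_D^c × Δ_E^c × Δ_F^c, parametrized by triples (t₁,t₂,t₃). -/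
def Lset (m : ℕ) (D E F : Finset (Fin m)) :
    Finset ((Fin m → ZMod 2) × (Fin m → ZMod 2) × (Fin m → ZMod 2)) :=
  Finset.univ.filter fun t => ¬ suppF t.1 ⊆ D ∧ ¬ suppF t.2.1 ⊆ E ∧ ¬ suppF t.2.2 ⊆ F

/-- The codeword c_a = (a·l)_{l∈L} for a = (p, q+ur), where
a·l = ⟨q,t₂⟩ + u(⟨p,t₁⟩ + ⟨q,t₃⟩ + ⟨r,t₂⟩). -/
def cword {m : ℕ} (D E F : Finset (Fin m)) (p q r : Fin m → ZMod 2) :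
    ↥(Lset m D E F) → R2 := fun l =>
  TrivSqZeroExt.inl (ip q l.val.2.1) +
    TrivSqZeroExt.inr (ip p l.val.1 + ip q l.val.2.2 + ip r l.val.2.1)

/-- Lee weight of a single element q + ur of Z_2[u]: wt_H(r) + wt_H(q+r). -/
def leeWtOne (x : R2) : ℕ :=
  (if TrivSqZeroExt.snd x ≠ 0 then 1 else 0) +
    (if TrivSqZeroExt.fst x + TrivSqZeroExt.snd x ≠ 0 then 1 else 0)

/-- Lee weight of a vector over Z_2[u]: sum of coordinate Lee weights. -/
def leeWt {ι : Type} [Fintype ι] (c : ι → R2) : ℕ := ∑ i, leeWtOne (c i)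

/-- The Gray map: coordinatewise q + ur ↦ (r, q + r). -/
def gray {ι : Type} (c : ι → R2) : ι ⊕ ι → ZMod 2 :=
  Sum.elim (fun i => TrivSqZeroExt.snd (c i))
    (fun i => TrivSqZeroExt.fst (c i) + TrivSqZeroExt.snd (c i))

/-- The code C_L as a set of words over Z_2[u] indexed by L. -/
def CL (m : ℕ) (D E F : Finset (Fin m)) : Set (↥(Lset m D E F) → R2) :=
  { c | ∃ p q r : Fin m → ZMod 2, c = cword D E F p q r }


def chi (x : ZMod 2) : ℤ := if x = 0 then 1 else -1

lemma chi_add (x y : ZMod 2) : chi (x + y) = chi x * chi y := by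
  revert x y; decide

lemma chi_sum {α : Type*} (s : Finset α) (f : α → ZMod 2) :
    chi (∑ i ∈ s, f i) = ∏ i ∈ s, chi (f i) := by
  induction s using Finset.cons_induction with
  | empty => simp [chi]
  | cons a s h ih => rw [Finset.sum_cons, Finset.prod_cons, chi_add, ih]

lemma sum_chi_subset {m : ℕ} (D : Finset (Fin m)) (p : Fin m → ZMod 2) :
    ∑ t ∈ univ.filter (fun t : Fin m → ZMod 2 => suppF t ⊆ D), chi (ip p t)
      = 2 ^ D.card * (if suppF p ∩ D = ∅ then 1 else 0) := by
  have hset : univ.filter (fun t : Fin m → ZMod 2 => suppF t ⊆ D)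
      = Fintype.piFinset (fun i => if i ∈ D then (univ : Finset (ZMod 2)) else {0}) := by
    ext t
    simp only [mem_filter, mem_univ, true_and, Fintype.mem_piFinset, suppF,
      Finset.subset_iff, mem_filter, mem_univ, true_and]
    constructor
    · intro h i
      by_cases hi : i ∈ D
      · simp [hi]
      · rw [if_neg hi, mem_singleton]
        by_contra hne
        exact hi (h hne)
    · intro h i hi
      by_contra hiD
      have := h i
      simp [hiD] at this
      exact hi this
  rw [hset]
  have : ∀ t : Fin m → ZMod 2, chi (ip p t) = ∏ i, chi (p i * t i) := fun t =>
    chi_sum univ _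
  simp_rw [this]
  rw [← Finset.prod_univ_sum (fun i => if i ∈ D then (univ : Finset (ZMod 2)) else {0})
    (fun i b => chi (p i * b))]
  have hfac : ∀ i : Fin m,
      (∑ b ∈ (if i ∈ D then (univ : Finset (ZMod 2)) else {0}), chi (p i * b))
        = if i ∈ D then (if p i = 0 then 2 else 0) else 1 := by
    intro i
    by_cases hi : i ∈ D
    · simp only [hi, if_pos]
      have : (univ : Finset (ZMod 2)) = {0, 1} := by decide
      rw [this]
      have h1 : ∀ x : ZMod 2, x = 0 ∨ x = 1 := by decide
      rcases h1 (p i) with h | h <;> simp [h, chi]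
    · simp [hi, chi]
  simp_rw [hfac]
  rw [← Finset.prod_mul_prod_compl D]
  rw [Finset.prod_congr rfl (fun i hi => if_pos hi),
    Finset.prod_congr rfl (fun i (hi : i ∈ Dᶜ) => if_neg (Finset.mem_compl.mp hi))]
  rw [Finset.prod_const_one, mul_one]
  have hiff : suppF p ∩ D = ∅ ↔ ∀ i ∈ D, p i = 0 := by
    simp only [suppF, Finset.eq_empty_iff_forall_notMem, Finset.mem_inter, mem_filter,
      mem_univ, true_and, not_and, ne_eq]
    constructor
    · intro h i hi
      by_contra hne
      exact h i hne hi
    · intro h i hne hiD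
      exact hne (h i hiD)
  by_cases h : ∀ i ∈ D, p i = 0
  · rw [if_pos (hiff.mpr h), mul_one, Finset.prod_congr rfl (fun i hi => if_pos (h i hi)),
      Finset.prod_const]
  · rw [if_neg (fun he => h (hiff.mp he)), mul_zero]
    push_neg at h
    obtain ⟨i, hi, hpi⟩ := h
    exact Finset.prod_eq_zero hi (by rw [if_neg hpi])

lemma sum_chi_neg {m : ℕ} (D : Finset (Fin m)) (p : Fin m → ZMod 2) :
    ∑ t ∈ univ.filter (fun t : Fin m → ZMod 2 => ¬ suppF t ⊆ D), chi (ip p t)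
      = 2 ^ m * (if p = 0 then 1 else 0)
        - 2 ^ D.card * (if suppF p ∩ D = ∅ then 1 else 0) := by
  have hsplit := Finset.sum_filter_add_sum_filter_not
    (univ : Finset (Fin m → ZMod 2)) (fun t => suppF t ⊆ D) (fun t => chi (ip p t))
  have htot : ∑ t : Fin m → ZMod 2, chi (ip p t)
      = 2 ^ m * (if p = 0 then 1 else 0) := by
    have h1 := sum_chi_subset (univ : Finset (Fin m)) p
    have h2 : univ.filter (fun t : Fin m → ZMod 2 => suppF t ⊆ (univ : Finset (Fin m)))
        = univ := by simp
    rw [h2] at h1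
    rw [h1, Finset.card_univ, Fintype.card_fin]
    congr 1
    have : suppF p ∩ univ = ∅ ↔ p = 0 := by
      rw [Finset.inter_univ]
      constructor
      · intro h; funext i
        show p i = 0
        by_contra hne
        exact (Finset.eq_empty_iff_forall_notMem.mp h i) (by simp [suppF, hne])
      · intro h; simp [h, suppF]
    simp only [this]
  have := sum_chi_subset D p
  linarith [hsplit, htot, this]

lemma sum_chi_triple {m : ℕ} (D E F : Finset (Fin m)) (a b c : Fin m → ZMod 2) :
    ∑ x ∈ Lset m D E F, chi (ip a x.1 + ip c x.2.2 + ip b x.2.1)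
      = (∑ t ∈ univ.filter (fun t : Fin m → ZMod 2 => ¬ suppF t ⊆ D), chi (ip a t))
        * (∑ t ∈ univ.filter (fun t : Fin m → ZMod 2 => ¬ suppF t ⊆ E), chi (ip b t))
        * (∑ t ∈ univ.filter (fun t : Fin m → ZMod 2 => ¬ suppF t ⊆ F), chi (ip c t)) := by
  have hL : Lset m D E F = (univ.filter fun t : Fin m → ZMod 2 => ¬suppF t ⊆ D) ×ˢ
      ((univ.filter fun t : Fin m → ZMod 2 => ¬suppF t ⊆ E) ×ˢ
        (univ.filter fun t : Fin m → ZMod 2 => ¬suppF t ⊆ F)) := by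
    ext x
    simp [Lset, Finset.mem_product]
  rw [hL, Finset.sum_product]
  simp_rw [Finset.sum_product, chi_add, mul_right_comm, ← Finset.mul_sum, ← Finset.sum_mul,
    ← Finset.sum_mul_sum]

lemma two_lee (x : R2) : (2:ℤ) * (leeWtOne x : ℤ)
    = 2 - chi (TrivSqZeroExt.snd x) - chi (TrivSqZeroExt.fst x + TrivSqZeroExt.snd x) := by
  unfold leeWtOne chi
  split_ifs <;> simp_all

lemma ip_add_left {m : ℕ} (q r t : Fin m → ZMod 2) :
    ip (q + r) t = ip q t + ip r t := by
  simp [ip, add_mul, Finset.sum_add_distrib]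

/-- 2·wt_L(c_a) = 2|L| − A·B·C − A·B'·C, where
A = 2^m·δ_{0,p} − 2^|D|·χ(supp(p)|D), B = 2^m·δ_{0,r} − 2^|E|·χ(supp(r)|E),
B' = 2^m·δ_{0,q+r} − 2^|E|·χ(supp(q+r)|E), C = 2^m·δ_{0,q} − 2^|F|·χ(supp(q)|F). -/
theorem stmt8 (m : ℕ) (hm : 2 ≤ m) (D E F : Finset (Fin m))
    (hD : D.card ≤ m - 1) (hE : E.card ≤ m - 1) (hF : F.card ≤ m - 1)
    (p q r : Fin m → ZMod 2)
    (A B B' C : ℤ)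
    (hA : A = 2 ^ m * (if p = 0 then 1 else 0)
        - 2 ^ D.card * (if suppF p ∩ D = ∅ then 1 else 0))
    (hB : B = 2 ^ m * (if r = 0 then 1 else 0)
        - 2 ^ E.card * (if suppF r ∩ E = ∅ then 1 else 0))
    (hB' : B' = 2 ^ m * (if q + r = 0 then 1 else 0)
        - 2 ^ E.card * (if suppF (q + r) ∩ E = ∅ then 1 else 0))
    (hC : C = 2 ^ m * (if q = 0 then 1 else 0)
        - 2 ^ F.card * (if suppF q ∩ F = ∅ then 1 else 0)) :
    2 * (leeWt (cword D E F p q r) : ℤ)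
      = 2 * ((Lset m D E F).card : ℤ) - A * B * C - A * B' * C := by
  have hg : ∀ x ∈ Lset m D E F, (2:ℤ) * (leeWtOne
        (TrivSqZeroExt.inl (ip q x.2.1) +
          TrivSqZeroExt.inr (ip p x.1 + ip q x.2.2 + ip r x.2.1) : R2) : ℤ)
      = 2 - chi (ip p x.1 + ip q x.2.2 + ip r x.2.1)
          - chi (ip p x.1 + ip q x.2.2 + ip (q + r) x.2.1) := by
    intro x _
    rw [two_lee]
    congr 2
    · simp
    · simp only [TrivSqZeroExt.fst_add, TrivSqZeroExt.fst_inl, TrivSqZeroExt.fst_inr,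
        TrivSqZeroExt.snd_add, TrivSqZeroExt.snd_inl, TrivSqZeroExt.snd_inr,
        ip_add_left, add_zero, zero_add]
      ring
  have hcast : (leeWt (cword D E F p q r) : ℤ)
      = ∑ x ∈ Lset m D E F, (leeWtOne
          (TrivSqZeroExt.inl (ip q x.2.1) +
            TrivSqZeroExt.inr (ip p x.1 + ip q x.2.2 + ip r x.2.1) : R2) : ℤ) := by
    unfold leeWt cword
    push_cast
    exact Finset.sum_coe_sort (Lset m D E F)
      (fun x => (leeWtOne (TrivSqZeroExt.inl (ip q x.2.1) +
        TrivSqZeroExt.inr (ip p x.1 + ip q x.2.2 + ip r x.2.1) : R2) : ℤ))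
  rw [hcast, Finset.mul_sum, Finset.sum_congr rfl hg]
  have h1 := sum_chi_triple D E F p r q
  have h2 := sum_chi_triple D E F p (q + r) q
  rw [sum_chi_neg D p, sum_chi_neg E r, sum_chi_neg F q] at h1
  rw [sum_chi_neg D p, sum_chi_neg E (q + r), sum_chi_neg F q] at h2
  rw [Finset.sum_sub_distrib, Finset.sum_sub_distrib, Finset.sum_const, h1, h2,
    hA, hB, hB', hC]
  push_cast
  ring
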